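/- arXiv:0710.2690 — 2 statements merged into one kernel-verified Lean document; each statement's English description precedes it below -/
import Mathlib

section
/- Let M be a metric space in which closed bounded sets are compact (a proper metric space), and let x, y ∈ M be connected by some Lipschitz path p : [0,1] → M with p(0) = x, p(1) = y. Then there exists a Lipschitz path q : [0,1] → M with q(0) = x, q(1) = y whose Lipschitz constant equals the infimum k of Lipschitz constants of all such paths. -/
open Set Filter Topology BoundedContinuousFunction
open scoped NNReal

/-!
Paths from `x` to `y` that are `K'`-Lipschitz for a fixed `K'` form a compact set of bounded
continuous maps `[0,1] → M` by Arzelà–Ascoli, since `M` is proper. These compact sets decrease as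
`K'` decreases to the infimum `k`, so by Cantor's intersection theorem some path lies in all of
them, and that path is `k`-Lipschitz.
-/

theorem lipschitzWith_of_forall_gt {α β : Type*} [PseudoMetricSpace α] [PseudoMetricSpace β]
    {f : α → β} {K : ℝ≥0} (h : ∀ K' > K, LipschitzWith K' f) : LipschitzWith K f := by
  refine LipschitzWith.of_dist_le_mul fun s t => ?_
  have hlim : Tendsto (fun K' : ℝ≥0 => (K' : ℝ) * dist s t) (𝓝[>] K) (𝓝 (K * dist s t)) :=
    ((NNReal.continuous_coe.mul continuous_const).tendsto K).mono_left nhdsWithin_le_nhds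
  exact ge_of_tendsto hlim <|
    eventually_nhdsWithin_of_forall fun K' hK' => (h K' hK').dist_le_mul s t

section

variable {α M : Type*} [PseudoMetricSpace α] [MetricSpace M] [CompactSpace α] [ProperSpace M]

theorem BoundedContinuousFunction.isCompact_setOf_apply_eq_and_lipschitzWith
    (K : ℝ≥0) (a : α) (x : M) : IsCompact {f : α →ᵇ M | f a = x ∧ LipschitzWith K f} := by
  refine arzela_ascoli₂ (Metric.closedBall x (K * Metric.diam (univ : Set α)))
    (isCompact_closedBall x _) _ ?closed ?bounded ?equicontinuous
  case closed =>
    exact (isClosed_eq (continuous_eval_const a) continuous_const).inter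
      ((isClosed_setOfPred_lipschitzWith K).preimage continuous_coeFun)
  case bounded =>
    rintro f s ⟨rfl, hf⟩
    calc dist (f s) (f a) ≤ K * dist s a := hf.dist_le_mul s a
      _ ≤ K * Metric.diam (univ : Set α) := by
        gcongr
        exact Metric.dist_le_diam_of_mem isCompact_univ.isBounded trivial trivial
  case equicontinuous =>
    exact (LipschitzWith.uniformEquicontinuous _ K fun f => f.2.2).equicontinuous

theorem exists_lipschitzWith_apply_eq_of_forall_gt {a b : α} {x y : M} {K : ℝ≥0}
    (h : ∀ K' > K, ∃ f : α → M, f a = x ∧ f b = y ∧ LipschitzWith K' f) :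
    ∃ f : α → M, f a = x ∧ f b = y ∧ LipschitzWith K f := by
  let paths (K' : Ioi K) : Set (α →ᵇ M) := {f | (f a = x ∧ LipschitzWith K' f) ∧ f b = y}
  have compact (K' : Ioi K) : IsCompact (paths K') :=
    (isCompact_setOf_apply_eq_and_lipschitzWith K' a x).inter_right
      (isClosed_eq (continuous_eval_const b) continuous_const)
  have directed : Directed (· ⊇ ·) paths :=
    Monotone.directed_ge fun _ _ hK' _ ⟨⟨ha, hf⟩, hb⟩ => ⟨⟨ha, hf.weaken hK'⟩, hb⟩
  have nonempty (K' : Ioi K) : (paths K').Nonempty := by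
    obtain ⟨f, ha, hb, hf⟩ := h K' K'.2
    exact ⟨mkOfCompact ⟨f, hf.continuous⟩, ⟨ha, hf⟩, hb⟩
  have : Nonempty (Ioi K) := ⟨⟨K + 1, lt_add_one K⟩⟩
  obtain ⟨f, hf⟩ := IsCompact.nonempty_iInter_of_directed_nonempty_isCompact_isClosed paths
    directed nonempty compact fun K' => (compact K').isClosed
  rw [mem_iInter] at hf
  exact ⟨f, (hf ⟨K + 1, lt_add_one K⟩).1.1, (hf ⟨K + 1, lt_add_one K⟩).2,
    lipschitzWith_of_forall_gt fun K' hK' => (hf ⟨K', hK'⟩).1.2⟩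

end

theorem stmt_11 {M : Type*} [MetricSpace M] [ProperSpace M] (x y : M)
    (hex : ∃ (p : ℝ → M) (C : ℝ), p 0 = x ∧ p 1 = y ∧
      ∀ s ∈ Set.Icc (0:ℝ) 1, ∀ t ∈ Set.Icc (0:ℝ) 1, dist (p s) (p t) ≤ C * |s - t|) :
    ∃ q : ℝ → M, q 0 = x ∧ q 1 = y ∧
      ∀ s ∈ Set.Icc (0:ℝ) 1, ∀ t ∈ Set.Icc (0:ℝ) 1,
        dist (q s) (q t) ≤
          sInf {C : ℝ | 0 ≤ C ∧ ∃ p : ℝ → M, p 0 = x ∧ p 1 = y ∧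
            ∀ s ∈ Set.Icc (0:ℝ) 1, ∀ t ∈ Set.Icc (0:ℝ) 1,
              dist (p s) (p t) ≤ C * |s - t|} * |s - t| := by
  set S : Set ℝ := {C : ℝ | 0 ≤ C ∧ ∃ p : ℝ → M, p 0 = x ∧ p 1 = y ∧
    ∀ s ∈ Icc (0:ℝ) 1, ∀ t ∈ Icc (0:ℝ) 1, dist (p s) (p t) ≤ C * |s - t|}
  have hS : S.Nonempty := by
    obtain ⟨p, C, hp0, hp1, hp⟩ := hex
    exact ⟨max C 0, le_max_right C 0, p, hp0, hp1, fun s hs t ht =>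
      (hp s hs t ht).trans (by gcongr; exact le_max_left C 0)⟩
  have hk : 0 ≤ sInf S := Real.sInf_nonneg fun _ hC => hC.1
  have h01 : (0:ℝ) ≤ 1 := zero_le_one
  have approx : ∀ K' > (sInf S).toNNReal, ∃ f : Icc (0:ℝ) 1 → M,
      f ⟨0, left_mem_Icc.2 h01⟩ = x ∧ f ⟨1, right_mem_Icc.2 h01⟩ = y ∧ LipschitzWith K' f := by
    intro K' hK'
    obtain ⟨C, ⟨-, p, hp0, hp1, hp⟩, hCK'⟩ :=
      exists_lt_of_csInf_lt hS ((Real.toNNReal_lt_iff_lt_coe hk).1 hK')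
    refine ⟨(Icc 0 1).domRestrict p, hp0, hp1, lipschitzOnWith_iff_restrict.1 ?_⟩
    refine lipschitzOnWith_iff_dist_le_mul.2 fun s hs t ht => (hp s hs t ht).trans ?_
    rw [Real.dist_eq]
    gcongr
  obtain ⟨g, hg0, hg1, hg⟩ := exists_lipschitzWith_apply_eq_of_forall_gt approx
  refine ⟨IccExtend h01 g, by rwa [IccExtend_left], by rwa [IccExtend_right],
    fun s _ t _ => ?_⟩
  have hq := (hg.comp (LipschitzWith.projIcc h01)).dist_le_mul s t
  rwa [mul_one, Real.coe_toNNReal _ hk, Real.dist_eq] at hq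
end

section
/- Let N be a strictly convex norm on ℝⁿ and q : [a, b] → ℝⁿ a k-Lipschitz path (with respect to d_N) satisfying N(q(b) − q(a)) = k·(b − a). Then q is affine: q(t) = q(a) + ((t − a)/(b − a))·(q(b) − q(a)) for all t ∈ [a, b] (assuming a < b). -/
/-!
Split `q b - q a` at an intermediate time `t` as `u + v` with `u = q t - q a`, `v = q b - q t`.
The Lipschitz bounds `N u ≤ k (t - a)`, `N v ≤ k (b - t)` together with the triangle inequality
and `N (u + v) = k (b - a)` force equality everywhere. Equality in the triangle inequality puts
`u` and `v` on a common ray, and comparing their norms gives `(b - t) • u = (t - a) • v`, which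
says that `q t` divides the segment from `q a` to `q b` in the ratio `(t - a) : (b - t)`.
-/

theorem smul_eq_smul_of_eq_mul_of_add_eq_add {E : Type*} [AddCommGroup E] [Module ℝ E]
    {N : E → ℝ} (hNz : ∀ x, N x = 0 ↔ x = 0)
    (hNh : ∀ (r : ℝ) (x : E), N (r • x) = |r| * N x)
    (hsc : ∀ w z : E, N (w + z) = N w + N z → w = 0 ∨ z = 0 ∨ ∃ r : ℝ, 0 < r ∧ z = r • w)
    {u v : E} {k α β : ℝ} (hu : N u = k * α) (hv : N v = k * β)
    (hadd : N (u + v) = N u + N v) : β • u = α • v := by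
  have hN0 : N 0 = 0 := (hNz 0).2 rfl
  by_cases hk : k = 0
  · rw [(hNz u).1 (by rw [hu, hk, zero_mul]), (hNz v).1 (by rw [hv, hk, zero_mul]),
      smul_zero, smul_zero]
  rcases hsc u v hadd with rfl | rfl | ⟨r, hr, rfl⟩
  · have hα : α = 0 := by simpa [hN0, hk] using hu
    simp [hα]
  · have hβ : β = 0 := by simpa [hN0, hk] using hv
    simp [hβ]
  · have hβ : β = r * α := by
      apply mul_left_cancel₀ hk
      rw [← hv, hNh, abs_of_pos hr, hu]
      ring
    rw [hβ, smul_comm, mul_smul]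

theorem eq_div_smul_add_of_smul_eq_smul {K E : Type*} [Field K] [AddCommGroup E] [Module K E]
    {u v : E} {α β : K} (hαβ : α + β ≠ 0) (h : β • u = α • v) :
    u = (α / (α + β)) • (u + v) := by
  refine smul_right_injective E hαβ ?_
  dsimp only
  rw [smul_smul, mul_div_cancel₀ _ hαβ, smul_add, ← h, add_smul]

theorem eq_mul_sub_of_lipschitzOn_of_eq {E : Type*} [AddCommGroup E] {N : E → ℝ}
    (hNt : ∀ x y, N (x + y) ≤ N x + N y) {a b k : ℝ} {q : ℝ → E}
    (hq : ∀ s ∈ Set.Icc a b, ∀ t ∈ Set.Icc a b, N (q s - q t) ≤ k * |s - t|)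
    (heq : N (q b - q a) = k * (b - a)) {t : ℝ} (ht : t ∈ Set.Icc a b) :
    N (q t - q a) = k * (t - a) ∧ N (q b - q t) = k * (b - t) := by
  have hab : a ≤ b := ht.1.trans ht.2
  have h₁ : N (q t - q a) ≤ k * (t - a) := by
    simpa [abs_of_nonneg (sub_nonneg.2 ht.1)] using hq t ht a ⟨le_rfl, hab⟩
  have h₂ : N (q b - q t) ≤ k * (b - t) := by
    simpa [abs_of_nonneg (sub_nonneg.2 ht.2)] using hq b ⟨hab, le_rfl⟩ t ht
  have htri : k * (b - a) ≤ N (q t - q a) + N (q b - q t) := by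
    rw [← heq, ← sub_add_sub_cancel' (q t)]
    exact hNt _ _
  constructor <;> linarith

theorem stmt_16_general (n : ℕ) (N : (Fin n → ℝ) → ℝ)
    (hNz : ∀ x, N x = 0 ↔ x = 0)
    (hNh : ∀ (r : ℝ) (x : Fin n → ℝ), N (r • x) = |r| * N x)
    (hNt : ∀ x y, N (x + y) ≤ N x + N y)
    (hsc : ∀ w z : Fin n → ℝ, N (w + z) = N w + N z →
      w = 0 ∨ z = 0 ∨ ∃ r : ℝ, 0 < r ∧ z = r • w)
    (a b k : ℝ) (hab : a < b) (q : ℝ → (Fin n → ℝ))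
    (hq : ∀ s ∈ Set.Icc a b, ∀ t ∈ Set.Icc a b, N (q s - q t) ≤ k * |s - t|)
    (heq : N (q b - q a) = k * (b - a)) :
    ∀ t ∈ Set.Icc a b, q t = q a + ((t - a) / (b - a)) • (q b - q a) := by
  intro t ht
  obtain ⟨hu, hv⟩ := eq_mul_sub_of_lipschitzOn_of_eq hNt hq heq ht
  have hsplit : q t - q a + (q b - q t) = q b - q a := sub_add_sub_cancel' ..
  have hadd : N (q t - q a + (q b - q t)) = N (q t - q a) + N (q b - q t) := by
    rw [hsplit, heq, hu, hv]
    ring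
  have hratio := smul_eq_smul_of_eq_mul_of_add_eq_add hNz hNh hsc hu hv hadd
  have hlen : t - a + (b - t) = b - a := by ring
  have := eq_div_smul_add_of_smul_eq_smul (by rw [hlen]; linarith) hratio
  rw [hsplit, hlen] at this
  rw [← this, add_sub_cancel]

theorem stmt_16 (n : ℕ) (N : (Fin n → ℝ) → ℝ)
    (hN0 : ∀ x, 0 ≤ N x)
    (hNz : ∀ x, N x = 0 ↔ x = 0)
    (hNh : ∀ (r : ℝ) (x : Fin n → ℝ), N (r • x) = |r| * N x)
    (hNt : ∀ x y, N (x + y) ≤ N x + N y)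
    (hsc : ∀ w z : Fin n → ℝ, N (w + z) = N w + N z →
      w = 0 ∨ z = 0 ∨ ∃ r : ℝ, 0 < r ∧ z = r • w)
    (a b k : ℝ) (hab : a < b) (q : ℝ → (Fin n → ℝ))
    (hq : ∀ s ∈ Set.Icc a b, ∀ t ∈ Set.Icc a b, N (q s - q t) ≤ k * |s - t|)
    (heq : N (q b - q a) = k * (b - a)) :
    ∀ t ∈ Set.Icc a b, q t = q a + ((t - a) / (b - a)) • (q b - q a) :=
  stmt_16_general n N hNz hNh hNt hsc a b k hab q hq heq
end
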